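/- arXiv:math/0111059 — 2 statements merged into one kernel-verified Lean document; each statement's English description precedes it below -/
import Mathlib

section
/- Let n ≥ 1, k ≥ 0 with k+1 ≤ n, and let O ⊆ [n] with 1 ∈ O and #O = k+1. Then the statistic los + linv(O(·),·) is constant on P(n,k+1;O); more precisely, for every π ∈ P(n,k+1;O): los(π) + linv(O,π) = Σ_{x ∈ O, x ≠ 1} (n − x + 1). -/
open Finset Polynomial

/-- A partition of `[n] = {1,…,n}` into `k` nonempty blocks `B₁-⋯-B_k`, indexed so that
`min B₁ < ⋯ < min B_k`, encoded by its restricted-growth word `w : Fin n → Fin k`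
(the element `i+1` of `[n]` lies in the block `B_{w i + 1}`). -/
structure SetPartition (n k : ℕ) where
  w : Fin n → Fin k
  surj : Function.Surjective w
  rgf : ∀ i : Fin n, ∀ c : Fin k, c < w i → ∃ j : Fin n, j < i ∧ w j = c

namespace SetPartition

variable {n k : ℕ}

instance : DecidableEq (SetPartition n k) := fun a b =>
  decidable_of_iff (a.w = b.w) (by cases a; cases b; simp)

noncomputable instance : Fintype (SetPartition n k) :=
  Fintype.ofInjective (fun π => π.w) (fun a b h => by cases a; cases b; simp_all)

/-- The set of openers (smallest elements of their blocks). -/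
def openers (π : SetPartition n k) : Finset (Fin n) :=
  univ.filter fun i => ∀ j, j < i → π.w j ≠ π.w i

/-- The set of closers (largest elements of their blocks). -/
def closers (π : SetPartition n k) : Finset (Fin n) :=
  univ.filter fun i => ∀ j, i < j → π.w j ≠ π.w i

/-- Closers that are not openers (`F_s`). -/
def closersOnly (π : SetPartition n k) : Finset (Fin n) := π.closers \ π.openers

/-- Openers that are not closers (`O_s`). -/
def openersOnly (π : SetPartition n k) : Finset (Fin n) := π.openers \ π.closers

/-- Elements that are neither openers nor closers (`P`, the transients). -/
def transients (π : SetPartition n k) : Finset (Fin n) :=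
  univ \ (π.openers ∪ π.closers)

def ros (π : SetPartition n k) : ℕ :=
  ∑ i, (π.openers.filter fun j => j < i ∧ π.w i < π.w j).card
def rob (π : SetPartition n k) : ℕ :=
  ∑ i, (π.openers.filter fun j => i < j ∧ π.w i < π.w j).card
def rcs (π : SetPartition n k) : ℕ :=
  ∑ i, (π.closers.filter fun j => j < i ∧ π.w i < π.w j).card
def rcb (π : SetPartition n k) : ℕ :=
  ∑ i, (π.closers.filter fun j => i < j ∧ π.w i < π.w j).card
def los (π : SetPartition n k) : ℕ :=
  ∑ i, (π.openers.filter fun j => j < i ∧ π.w j < π.w i).card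
def lob (π : SetPartition n k) : ℕ :=
  ∑ i, (π.openers.filter fun j => i < j ∧ π.w j < π.w i).card
def lcs (π : SetPartition n k) : ℕ :=
  ∑ i, (π.closers.filter fun j => j < i ∧ π.w j < π.w i).card
def lcb (π : SetPartition n k) : ℕ :=
  ∑ i, (π.closers.filter fun j => i < j ∧ π.w j < π.w i).card

def mak (π : SetPartition n k) : ℕ := π.ros + π.lcs
def mak' (π : SetPartition n k) : ℕ := π.lob + π.rcb
def lmak (π : SetPartition n k) : ℤ :=
  (n : ℤ) * ((k : ℤ) - 1) - ((π.los : ℤ) + (π.rcs : ℤ))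
def lmak' (π : SetPartition n k) : ℤ :=
  (n : ℤ) * ((k : ℤ) - 1) - ((π.lcb : ℤ) + (π.rob : ℤ))

/-- `rinv(b,π) = #{a : a < b, w_a > w_b}`. -/
def rinv (π : SetPartition n k) (b : Fin n) : ℕ :=
  (univ.filter fun a => a < b ∧ π.w b < π.w a).card

/-- `nrinv(b,π) = #{a : a > b, w_a > w_b}`. -/
def nrinv (π : SetPartition n k) (b : Fin n) : ℕ :=
  (univ.filter fun a => b < a ∧ π.w b < π.w a).card

/-- `linv(b,π) = #{a : a > b, w_a < w_b}`. -/
def linv (π : SetPartition n k) (b : Fin n) : ℕ :=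
  (univ.filter fun a => b < a ∧ π.w a < π.w b).card

/-- `rinv(X,π) = Σ_{b ∈ X} rinv(b,π)`. -/
def rinvSet (π : SetPartition n k) (X : Finset (Fin n)) : ℕ := ∑ b ∈ X, π.rinv b

/-- `linv(X,π) = Σ_{b ∈ X} linv(b,π)`. -/
def linvSet (π : SetPartition n k) (X : Finset (Fin n)) : ℕ := ∑ b ∈ X, π.linv b

/-- `g(B_c)`: the largest element of the block with index `c`. -/
def blockMax (π : SetPartition n k) (c : Fin k) : Fin n :=
  (univ.filter fun i => π.w i = c).max' (by
    obtain ⟨i, hi⟩ := π.surj c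
    exact ⟨i, mem_filter.2 ⟨mem_univ i, hi⟩⟩)

/-- The block with index `c` is incomplete at stage `m`, i.e. it meets the first `m`
elements of `[n]` but is not contained in them. -/
def IncompleteAt (π : SetPartition n k) (m : ℕ) (c : Fin k) : Prop :=
  (∃ j : Fin n, (j : ℕ) < m ∧ π.w j = c) ∧ ∃ j : Fin n, m ≤ (j : ℕ) ∧ π.w j = c

instance (π : SetPartition n k) (m : ℕ) : DecidablePred (π.IncompleteAt m) := fun c =>
  inferInstanceAs (Decidable
    ((∃ j : Fin n, (j : ℕ) < m ∧ π.w j = c) ∧ ∃ j : Fin n, m ≤ (j : ℕ) ∧ π.w j = c))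

/-- `l_i(π)`: the number of blocks incomplete at stage `i-1`; here the element `i` of `[n]`
is represented by the index `i - 1 : Fin n`, so the first `i - 1` elements are those with
index `< i`. -/
def lTrace (π : SetPartition n k) (i : Fin n) : ℕ :=
  (univ.filter fun c => π.IncompleteAt (i : ℕ) c).card

/-- `γ_i(π)`: one plus the number of blocks incomplete at stage `i` lying to the left of the
block containing `i`. -/
def gammaTrace (π : SetPartition n k) (i : Fin n) : ℕ :=
  1 + (univ.filter fun c => π.IncompleteAt ((i : ℕ) + 1) c ∧ c < π.w i).card

end SetPartition

/-- The `q`-Stirling numbers of the second kind `S_q(n,k) ∈ ℤ[q]`, with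
`S_q(n,k) = q^{k-1} S_q(n-1,k-1) + [k]_q S_q(n-1,k)`, `S_q(0,0) = 1`, and
`S_q(n,k) = 0` when exactly one of `n,k` is zero (whence also for `k > n`). -/
noncomputable def qStirling : ℕ → ℕ → Polynomial ℤ
  | 0, 0 => 1
  | 0, _ + 1 => 0
  | _ + 1, 0 => 0
  | n + 1, k + 1 =>
      X ^ k * qStirling n k + (∑ i ∈ Finset.range (k + 1), X ^ i) * qStirling n (k + 1)

/- For an opener `o`, the elements `i ≥ o` fall into three classes: block right of the block of `o`,
block left of it, or the block of `o` itself; together they number `n - o`. Summed over the openers,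
the first classes give `los`, the second `linv(O)`, and the third add up to `n` because the openers
index the blocks. The opener `1` contributes exactly `n`, which leaves the claimed sum. -/

theorem card_filter_lt_add_card_filter_gt_add_card_filter_eq {n : ℕ} {α : Type*} [LinearOrder α]
    (f : Fin n → α) (o : Fin n) :
    #{i | o < i ∧ f o < f i} + #{i | o < i ∧ f i < f o} + #{i | o ≤ i ∧ f i = f o} = n - o := by
  rw [← Fin.card_Ici, ← filter_le_eq_Ici]
  simp only [card_filter, ← sum_add_distrib]
  refine sum_congr rfl fun i _ => ?_
  rcases lt_trichotomy o i with hoi | rfl | hio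
  · rcases lt_trichotomy (f o) (f i) with h | h | h
    · simp [hoi, hoi.le, h, h.ne', h.not_gt]
    · simp [hoi, hoi.le, h]
    · simp [hoi, hoi.le, h, h.ne, h.not_gt]
  · simp
  · simp [hio.not_gt, hio.not_ge]

namespace SetPartition

variable {n k : ℕ} (π : SetPartition n k)

theorem mem_openers {i : Fin n} : i ∈ π.openers ↔ ∀ j < i, π.w j ≠ π.w i := by
  simp [openers]

theorem le_of_mem_openers {o i : Fin n} (ho : o ∈ π.openers) (h : π.w i = π.w o) : o ≤ i :=
  not_lt.1 fun hi => (π.mem_openers.1 ho) i hi h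

theorem injOn_openers : Set.InjOn π.w π.openers := fun _ ho _ ho' h =>
  le_antisymm (π.le_of_mem_openers ho h.symm) (π.le_of_mem_openers ho' h)

theorem exists_mem_openers_eq (i : Fin n) : ∃ o ∈ π.openers, π.w o = π.w i := by
  obtain ⟨o, ho, hmin⟩ := exists_min_image {j | π.w j = π.w i} id ⟨i, by simp⟩
  refine ⟨o, π.mem_openers.2 fun j hj hwj => ?_, (mem_filter.1 ho).2⟩
  exact (hmin j (by simpa [hwj] using ho)).not_gt hj

theorem image_openers : π.openers.image π.w = univ :=
  eq_univ_of_forall fun c => by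
    obtain ⟨i, rfl⟩ := π.surj c
    obtain ⟨o, ho, hwo⟩ := π.exists_mem_openers_eq i
    exact mem_image.2 ⟨o, ho, hwo⟩

theorem sum_openers_card_block : ∑ o ∈ π.openers, #{i | o ≤ i ∧ π.w i = π.w o} = n :=
  calc ∑ o ∈ π.openers, #{i | o ≤ i ∧ π.w i = π.w o}
      = ∑ o ∈ π.openers, #{i | π.w i = π.w o} := sum_congr rfl fun o ho =>
        congrArg card <| filter_congr fun _ _ => and_iff_right_of_imp (π.le_of_mem_openers ho)
    _ = n := by
      rw [← sum_image (f := fun c => #{i | π.w i = c}) π.injOn_openers, image_openers,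
        ← card_eq_sum_card_fiberwise fun _ _ => mem_univ _, card_univ, Fintype.card_fin]

theorem los_eq_sum_openers : π.los = ∑ o ∈ π.openers, #{i | o < i ∧ π.w o < π.w i} := by
  simp only [los, card_filter]
  exact sum_comm

end SetPartition

/-- Let `n ≥ 1`, `k ≥ 0` with `k+1 ≤ n`, and let `O ⊆ [n]` with `1 ∈ O`
and `#O = k+1` (the element `x+1` of `[n]` is represented by `x : Fin n`, so `1 ∈ O`
reads `⟨0,_⟩ ∈ O` and `n - x + 1` reads `n - (x : ℕ)`). Then for every `π ∈ P(n,k+1)`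
whose set of openers is `O`:
`los(π) + linv(O,π) = Σ_{x ∈ O, x ≠ 1} (n - x + 1)`. -/
theorem los_add_linv_openers_const (n k : ℕ) (hn : 1 ≤ n)
    (O : Finset (Fin n)) (hO1 : (⟨0, by omega⟩ : Fin n) ∈ O)
    (π : SetPartition n (k + 1)) (hπ : π.openers = O) :
    π.los + π.linvSet O = ∑ x ∈ O.erase ⟨0, by omega⟩, (n - (x : ℕ)) := by
  subst hπ
  have hsum : π.los + π.linvSet π.openers + n = ∑ o ∈ π.openers, (n - (o : ℕ)) :=
    calc π.los + π.linvSet π.openers + n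
        = ∑ o ∈ π.openers, (#{i | o < i ∧ π.w o < π.w i} + π.linv o
            + #{i | o ≤ i ∧ π.w i = π.w o}) := by
          rw [π.los_eq_sum_openers, SetPartition.linvSet, sum_add_distrib, sum_add_distrib,
            π.sum_openers_card_block]
      _ = ∑ o ∈ π.openers, (n - (o : ℕ)) :=
          sum_congr rfl fun o _ => card_filter_lt_add_card_filter_gt_add_card_filter_eq π.w o
  rw [← add_sum_erase _ _ hO1, Fin.val_mk, Nat.sub_zero] at hsum
  omega
end

section
/- Let m ≥ 1 and k ≥ 0 with k+1 ≤ m, and let i ∈ [k]. Then for every real q > 0: Σ_{π∈P(m,k+1)} q^{mak(π) + k − nrinv(g(B_{i+1}),π)} = q^{i} · Σ_{π∈P(m,k+1)} q^{mak(π)}, where the exponents are integers. -/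
open Finset Polynomial

/-!
For a set `T` of block indices put
`W_T(n, K) = Σ_{π ∈ P(n, K)} q^(mak π - Σ_{c ∈ T} nrinv(g(B_c), π))`.
We show `W_T(n, K) = q^(-rightBlocks T) W_∅(n, K)`, where `rightBlocks T` counts the pairs of
blocks `c < c'` with `c ∈ T`, by induction on `n`: a partition of `[n + 1]` comes from a partition
`π` of `[n]` by putting `n + 1` into a new last block or into an existing block `B_d`.
In the first case `mak` grows by the number of blocks of `π` and every `nrinv(g(B_c))` by one.
In the second, `g(B_d)` becomes `n + 1`, `mak` changes by `K - 1 - nrinv(g(B_d), π)` and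
`nrinv(g(B_c))` by `[c < d]`, so the exponent for `T` is the one for `T ∪ {d}` shifted by
`K - 1 - #{c ∈ T | c < d}`. Against the factor `q^(-rightBlocks (T ∪ {d}))` of the induction
hypothesis these shifts run through `0, …, K - 1` exactly once as `d` varies.
-/

lemma Fin.card_filter_univ_castSucc {n : ℕ} (p : Fin (n + 1) → Prop) [DecidablePred p] :
    #{i | p i} = #{i : Fin n | p i.castSucc} + if p (Fin.last n) then 1 else 0 := by
  simp only [card_filter, Fin.sum_univ_castSucc]

lemma Finset.sum_card_filter_lt {α M : Type*} [LinearOrder α] [AddCommMonoid M]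
    (s : Finset α) (f : ℕ → M) :
    ∑ a ∈ s, f #{b ∈ s | b < a} = ∑ j ∈ range #s, f j := by
  induction s using Finset.induction_on_max with
  | empty => simp
  | insert a s ha ih =>
    have ha' : a ∉ s := fun h => lt_irrefl a (ha a h)
    have rank_a : {b ∈ insert a s | b < a} = s := by
      rw [filter_insert, if_neg (lt_irrefl a), filter_true_of_mem ha]
    have rank_s : ∀ x ∈ s, {b ∈ insert a s | b < x} = {b ∈ s | b < x} := fun x hx => by
      rw [filter_insert, if_neg (ha x hx).not_gt]
    rw [sum_insert ha', card_insert_of_notMem ha', sum_range_succ, rank_a, add_comm,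
      sum_congr rfl fun x hx => congrArg f (congrArg card (rank_s x hx)), ih]

/-- Ranking `s` downwards from `N - 1` and its complement upwards from `0` is a
permutation of `Fin N`. -/
lemma Fin.sum_pow_rank {M : Type*} [Semiring M] {N : ℕ} (s : Finset (Fin N)) (q : M) :
    ∑ d, q ^ (if d ∈ s then N - 1 - #{c ∈ s | c < d} else #{c ∈ sᶜ | c < d})
      = ∑ j ∈ range N, q ^ j := by
  have hcompl : ({d | d ∉ s} : Finset (Fin N)) = sᶜ := by ext; simp
  have hcard : #s ≤ N := card_le_univ s |>.trans_eq (Fintype.card_fin N)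
  simp only [pow_ite, sum_ite, filter_mem_eq_inter, univ_inter, hcompl]
  rw [sum_card_filter_lt s (fun j => q ^ (N - 1 - j)), sum_card_filter_lt sᶜ (q ^ ·),
    card_compl, Fintype.card_fin, ← sum_range_reflect, add_comm]
  generalize #s = t at hcard ⊢
  obtain ⟨r, rfl⟩ := Nat.exists_eq_add_of_le' hcard
  rw [Nat.add_sub_cancel, sum_range_add]
  refine congrArg _ (sum_congr rfl fun j hj => congrArg _ ?_)
  have := mem_range.1 hj
  omega

lemma Fin.card_filter_lt_add_card_filter_compl_lt {N : ℕ} (s : Finset (Fin N)) (d : Fin N) :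
    #{c ∈ s | c < d} + #{c ∈ sᶜ | c < d} = d := by
  rw [← card_union_of_disjoint (disjoint_filter_filter disjoint_compl_right), ← filter_union,
    union_compl, filter_gt_eq_Iio, Fin.card_Iio]

namespace SetPartition

variable {n K : ℕ}

lemma ext_w {π σ : SetPartition n K} (h : π.w = σ.w) : π = σ := by
  cases π; cases σ; simp_all

lemma nonempty_block (π : SetPartition n K) (c : Fin K) :
    (univ.filter fun i => π.w i = c).Nonempty :=
  let ⟨i, hi⟩ := π.surj c; ⟨i, mem_filter.2 ⟨mem_univ i, hi⟩⟩

def blockMin (π : SetPartition n K) (c : Fin K) : Fin n :=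
  (univ.filter fun i => π.w i = c).min' (π.nonempty_block c)

@[simp] lemma w_blockMin (π : SetPartition n K) (c : Fin K) : π.w (π.blockMin c) = c :=
  (mem_filter.1 (min'_mem _ (π.nonempty_block c))).2

@[simp] lemma w_blockMax (π : SetPartition n K) (c : Fin K) : π.w (π.blockMax c) = c :=
  (mem_filter.1 (max'_mem _ (π.nonempty_block c))).2

lemma blockMin_le (π : SetPartition n K) {i : Fin n} {c : Fin K} (h : π.w i = c) :
    π.blockMin c ≤ i :=
  min'_le _ i (mem_filter.2 ⟨mem_univ i, h⟩)

lemma le_blockMax (π : SetPartition n K) {i : Fin n} {c : Fin K} (h : π.w i = c) :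
    i ≤ π.blockMax c :=
  le_max' _ i (mem_filter.2 ⟨mem_univ i, h⟩)

lemma blockMin_eq {π : SetPartition n K} {i : Fin n} {c : Fin K} (h : π.w i = c)
    (hmin : ∀ j < i, π.w j ≠ c) : π.blockMin c = i :=
  (π.blockMin_le h).antisymm <| not_lt.1 fun hlt => hmin _ hlt (π.w_blockMin c)

lemma blockMax_eq {π : SetPartition n K} {i : Fin n} {c : Fin K} (h : π.w i = c)
    (hmax : ∀ j, i < j → π.w j ≠ c) : π.blockMax c = i :=
  (not_lt.1 fun hlt => hmax _ hlt (π.w_blockMax c)).antisymm (π.le_blockMax h)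

lemma openers_eq_image (π : SetPartition n K) : π.openers = univ.image π.blockMin := by
  ext i
  simp only [openers, mem_filter, mem_univ, true_and, mem_image]
  refine ⟨fun h => ⟨π.w i, blockMin_eq rfl h⟩, ?_⟩
  rintro ⟨c, rfl⟩ j hj hw
  exact (π.blockMin_le (hw.trans (π.w_blockMin c))).not_gt hj

lemma closers_eq_image (π : SetPartition n K) : π.closers = univ.image π.blockMax := by
  ext i
  simp only [closers, mem_filter, mem_univ, true_and, mem_image]
  refine ⟨fun h => ⟨π.w i, blockMax_eq rfl h⟩, ?_⟩
  rintro ⟨c, rfl⟩ j hj hw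
  exact (π.le_blockMax (hw.trans (π.w_blockMax c))).not_gt hj

lemma ros_eq_sum_card (π : SetPartition n K) :
    π.ros = ∑ i, #{c | π.blockMin c < i ∧ π.w i < c} := by
  refine sum_congr rfl fun i _ => ?_
  rw [openers_eq_image, filter_image, card_image_of_injective _
    (Function.LeftInverse.injective π.w_blockMin)]
  simp only [w_blockMin]

lemma lcs_eq_sum_card (π : SetPartition n K) :
    π.lcs = ∑ i, #{c | π.blockMax c < i ∧ c < π.w i} := by
  refine sum_congr rfl fun i _ => ?_
  rw [closers_eq_image, filter_image, card_image_of_injective _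
    (Function.LeftInverse.injective π.w_blockMax)]
  simp only [w_blockMax]

/-- Append `n + 1` to the existing block `B_{d+1}`. -/
def snoc (π : SetPartition n K) (d : Fin K) : SetPartition (n + 1) K where
  w := Fin.snoc π.w d
  surj c := let ⟨j, hj⟩ := π.surj c; ⟨j.castSucc, by simpa using hj⟩
  rgf i c hc := by
    induction i using Fin.lastCases with
    | last =>
      obtain ⟨j, hj⟩ := π.surj c
      exact ⟨j.castSucc, Fin.castSucc_lt_last j, by simpa using hj⟩
    | cast i =>
      obtain ⟨j, hj, hw⟩ := π.rgf i c (by simpa using hc)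
      exact ⟨j.castSucc, by simpa using hj, by simpa using hw⟩

/-- Append `n + 1` as a new singleton block `B_{K+1}`. -/
def snocNew (π : SetPartition n K) : SetPartition (n + 1) (K + 1) where
  w := Fin.snoc (Fin.castSucc ∘ π.w) (Fin.last K)
  surj c := by
    induction c using Fin.lastCases with
    | last => exact ⟨Fin.last n, by simp⟩
    | cast c => obtain ⟨j, hj⟩ := π.surj c; exact ⟨j.castSucc, by simp [hj]⟩
  rgf i c hc := by
    obtain ⟨c, rfl⟩ := Fin.exists_castSucc_eq.2 (hc.trans_le (Fin.le_last _)).ne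
    induction i using Fin.lastCases with
    | last => obtain ⟨j, hj⟩ := π.surj c; exact ⟨j.castSucc, Fin.castSucc_lt_last j, by simp [hj]⟩
    | cast i =>
      obtain ⟨j, hj, hw⟩ := π.rgf i c (by simpa using hc)
      exact ⟨j.castSucc, by simpa using hj, by simp [hw]⟩

@[simp] lemma snoc_w_castSucc (π : SetPartition n K) (d : Fin K) (j : Fin n) :
    (π.snoc d).w j.castSucc = π.w j := by simp [snoc]

@[simp] lemma snoc_w_last (π : SetPartition n K) (d : Fin K) :
    (π.snoc d).w (Fin.last n) = d := by simp [snoc]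

@[simp] lemma snocNew_w_castSucc (π : SetPartition n K) (j : Fin n) :
    π.snocNew.w j.castSucc = (π.w j).castSucc := by simp [snocNew]

@[simp] lemma snocNew_w_last (π : SetPartition n K) :
    π.snocNew.w (Fin.last n) = Fin.last K := by simp [snocNew]

@[simp] lemma blockMin_snoc (π : SetPartition n K) (d c : Fin K) :
    (π.snoc d).blockMin c = (π.blockMin c).castSucc := by
  refine blockMin_eq (by simp) fun j hj => ?_
  obtain ⟨j, rfl⟩ := Fin.exists_castSucc_eq.2 (hj.trans (Fin.castSucc_lt_last _)).ne
  simpa using fun h => (π.blockMin_le h).not_gt (by simpa using hj)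

lemma blockMax_snoc (π : SetPartition n K) (d c : Fin K) :
    (π.snoc d).blockMax c = if c = d then Fin.last n else (π.blockMax c).castSucc := by
  split_ifs with hcd
  · exact blockMax_eq (by simp [hcd]) fun j hj => absurd (Fin.le_last j) hj.not_ge
  · refine blockMax_eq (by simp) fun j hj => ?_
    induction j using Fin.lastCases with
    | last => simpa using Ne.symm hcd
    | cast j => simpa using fun h => (π.le_blockMax h).not_gt (by simpa using hj)

@[simp] lemma blockMin_snocNew_castSucc (π : SetPartition n K) (c : Fin K) :
    π.snocNew.blockMin c.castSucc = (π.blockMin c).castSucc := by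
  refine blockMin_eq (by simp) fun j hj => ?_
  obtain ⟨j, rfl⟩ := Fin.exists_castSucc_eq.2 (hj.trans (Fin.castSucc_lt_last _)).ne
  simpa using fun h => (π.blockMin_le h).not_gt (by simpa using hj)

@[simp] lemma blockMin_snocNew_last (π : SetPartition n K) :
    π.snocNew.blockMin (Fin.last K) = Fin.last n := by
  refine blockMin_eq (by simp) fun j hj => ?_
  obtain ⟨j, rfl⟩ := Fin.exists_castSucc_eq.2 hj.ne
  simp

@[simp] lemma blockMax_snocNew_castSucc (π : SetPartition n K) (c : Fin K) :
    π.snocNew.blockMax c.castSucc = (π.blockMax c).castSucc := by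
  refine blockMax_eq (by simp) fun j hj => ?_
  induction j using Fin.lastCases with
  | last => simpa using (Fin.castSucc_lt_last _).ne'
  | cast j => simpa using fun h => (π.le_blockMax h).not_gt (by simpa using hj)

@[simp] lemma blockMax_snocNew_last (π : SetPartition n K) :
    π.snocNew.blockMax (Fin.last K) = Fin.last n :=
  blockMax_eq (by simp) fun j hj => absurd (Fin.le_last j) hj.not_ge

lemma ros_snoc (π : SetPartition n K) (d : Fin K) :
    (π.snoc d).ros = π.ros + #{c | d < c} := by
  simp [ros_eq_sum_card, Fin.sum_univ_castSucc, Fin.castSucc_lt_last]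

/-- Appending `n + 1` to `B_{d+1}` dethrones `g(B_{d+1})` as a closer, which costs exactly
the right-larger letters counted by `nrinv`. -/
lemma lcs_snoc (π : SetPartition n K) (d : Fin K) :
    (π.snoc d).lcs + π.nrinv (π.blockMax d) = π.lcs + #{c | c < d} := by
  have row : ∀ i : Fin n, #{c | (π.snoc d).blockMax c < i.castSucc ∧ c < π.w i}
      + (if π.blockMax d < i ∧ d < π.w i then 1 else 0)
      = #{c | π.blockMax c < i ∧ c < π.w i} := fun i => by
    have hiff : ∀ c, (π.snoc d).blockMax c < i.castSucc ∧ c < π.w i ↔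
        c ≠ d ∧ (π.blockMax c < i ∧ c < π.w i) := fun c => by
      rw [blockMax_snoc]; split_ifs with h <;> simp [h, (Fin.le_last _).not_gt]
    rw [filter_congr fun c _ => hiff c, ← filter_filter, filter_ne', filter_erase]
    split_ifs with h
    · exact card_erase_add_one (mem_filter.2 ⟨mem_univ _, h⟩)
    · rw [erase_eq_of_notMem (by simp [h]), add_zero]
  have last : #{c | (π.snoc d).blockMax c < Fin.last n ∧ c < d} = #{c | c < d} := by
    refine congrArg card (filter_congr fun c _ => ?_)
    simp +contextual [blockMax_snoc, ne_of_lt, Fin.castSucc_lt_last]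
  have nrinv_eq : π.nrinv (π.blockMax d)
      = ∑ i, if π.blockMax d < i ∧ d < π.w i then 1 else 0 := by
    rw [nrinv, card_filter, w_blockMax]
  rw [lcs_eq_sum_card, lcs_eq_sum_card, Fin.sum_univ_castSucc]
  simp only [snoc_w_castSucc, snoc_w_last]
  rw [last, nrinv_eq, ← sum_congr rfl fun i _ => row i, sum_add_distrib]
  ring

lemma ros_snocNew (π : SetPartition n K) : π.snocNew.ros = π.ros := by
  simp [ros_eq_sum_card, Fin.sum_univ_castSucc, Fin.card_filter_univ_castSucc,
    (Fin.le_last _).not_gt]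

lemma lcs_snocNew (π : SetPartition n K) : π.snocNew.lcs = π.lcs + K := by
  simp [lcs_eq_sum_card, Fin.sum_univ_castSucc, Fin.card_filter_univ_castSucc,
    Fin.castSucc_lt_last, (Fin.le_last _).not_gt]

lemma mak_snoc (π : SetPartition n K) (d : Fin K) :
    (π.snoc d).mak + π.nrinv (π.blockMax d) + 1 = π.mak + K := by
  have := π.lcs_snoc d
  rw [filter_gt_eq_Iio, Fin.card_Iio] at this
  rw [mak, mak, ros_snoc, filter_lt_eq_Ioi, Fin.card_Ioi]
  omega

lemma mak_snocNew (π : SetPartition n K) : π.snocNew.mak = π.mak + K := by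
  rw [mak, mak, ros_snocNew, lcs_snocNew, add_assoc]

lemma nrinv_last (σ : SetPartition (n + 1) K) : σ.nrinv (Fin.last n) = 0 := by
  simp [nrinv, (Fin.le_last _).not_gt]

lemma nrinv_snoc_castSucc (π : SetPartition n K) (d : Fin K) (b : Fin n) :
    (π.snoc d).nrinv b.castSucc = π.nrinv b + if π.w b < d then 1 else 0 := by
  simp [nrinv, Fin.card_filter_univ_castSucc, Fin.castSucc_lt_last]

lemma nrinv_snocNew_castSucc (π : SetPartition n K) (b : Fin n) :
    π.snocNew.nrinv b.castSucc = π.nrinv b + 1 := by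
  simp [nrinv, Fin.card_filter_univ_castSucc, Fin.castSucc_lt_last]

lemma nrinv_blockMax_snoc (π : SetPartition n K) (d c : Fin K) :
    (π.snoc d).nrinv ((π.snoc d).blockMax c) + (if c = d then π.nrinv (π.blockMax d) else 0)
      = π.nrinv (π.blockMax c) + if c < d then 1 else 0 := by
  rw [blockMax_snoc]
  split_ifs with hcd hlt hlt
  · exact absurd hlt (hcd ▸ lt_irrefl c)
  · rw [nrinv_last, hcd, zero_add, add_zero]
  · rw [nrinv_snoc_castSucc, w_blockMax, if_pos hlt, add_zero]
  · rw [nrinv_snoc_castSucc, w_blockMax, if_neg hlt]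

lemma sum_nrinv_blockMax_snoc (π : SetPartition n K) (d : Fin K) (U : Finset (Fin K)) :
    ∑ c ∈ U, (π.snoc d).nrinv ((π.snoc d).blockMax c) + π.nrinv (π.blockMax d)
      = ∑ c ∈ insert d U, π.nrinv (π.blockMax c) + #{c ∈ U | c < d} := by
  have h := sum_congr rfl fun c (_ : c ∈ U) => π.nrinv_blockMax_snoc d c
  rw [sum_add_distrib, sum_add_distrib, sum_ite_eq', sum_boole, Nat.cast_id] at h
  by_cases hd : d ∈ U
  · rw [if_pos hd] at h
    rw [insert_eq_of_mem hd, h]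
  · rw [if_neg hd, add_zero] at h
    rw [sum_insert hd, h]
    ring

lemma sum_nrinv_blockMax_snocNew (π : SetPartition n K) (U : Finset (Fin (K + 1))) :
    ∑ c ∈ U, π.snocNew.nrinv (π.snocNew.blockMax c)
      = ∑ c ∈ U.preimage Fin.castSucc (Fin.castSucc_injective K).injOn,
          (π.nrinv (π.blockMax c) + 1) := by
  have last : ∀ c ∈ U, c ∉ Set.range Fin.castSucc →
      π.snocNew.nrinv (π.snocNew.blockMax c) = 0 := fun c _ hc => by
    obtain rfl : c = Fin.last K := Fin.eq_last_of_not_lt (by simpa using hc)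
    rw [blockMax_snocNew_last, nrinv_last]
  simp [← sum_preimage Fin.castSucc U _ _ last, nrinv_snocNew_castSucc]

lemma snoc_inj {π₁ π₂ : SetPartition n K} {d₁ d₂ : Fin K} :
    π₁.snoc d₁ = π₂.snoc d₂ ↔ π₁ = π₂ ∧ d₁ = d₂ := by
  refine ⟨fun h => ?_, fun h => h.1 ▸ h.2 ▸ rfl⟩
  have hw := congrArg w h
  exact ⟨ext_w (funext fun j => by simpa using congrFun hw j.castSucc),
    by simpa using congrFun hw (Fin.last n)⟩

lemma snocNew_injective : Function.Injective (snocNew : SetPartition n K → _) := fun π₁ π₂ h =>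
  ext_w (funext fun j => by simpa using congrFun (congrArg w h) j.castSucc)

lemma snoc_ne_snocNew (π : SetPartition n (K + 1)) (d : Fin (K + 1)) (π' : SetPartition n K) :
    π.snoc d ≠ π'.snocNew := by
  intro h
  have hw := congrArg w h
  have hd : d = Fin.last K := by simpa using congrFun hw (Fin.last n)
  obtain ⟨j, hj⟩ := π.surj d
  have := congrFun hw j.castSucc
  rw [snoc_w_castSucc, snocNew_w_castSucc, hj, hd] at this
  exact (Fin.castSucc_lt_last _).ne' this

def init (σ : SetPartition (n + 1) K) (h : ∃ j : Fin n, σ.w j.castSucc = σ.w (Fin.last n)) :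
    SetPartition n K where
  w j := σ.w j.castSucc
  surj c := by
    obtain ⟨j, rfl⟩ := σ.surj c
    induction j using Fin.lastCases with
    | last => exact h
    | cast j => exact ⟨j, rfl⟩
  rgf i c hc := by
    obtain ⟨j, hj, hw⟩ := σ.rgf i.castSucc c hc
    obtain ⟨j, rfl⟩ := Fin.exists_castSucc_eq.2 (hj.trans (Fin.castSucc_lt_last i)).ne
    exact ⟨j, Fin.castSucc_lt_castSucc_iff.1 hj, hw⟩

lemma init_snoc (σ : SetPartition (n + 1) K) (h : ∃ j : Fin n, σ.w j.castSucc = σ.w (Fin.last n)) :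
    (σ.init h).snoc (σ.w (Fin.last n)) = σ :=
  ext_w (funext fun j => by induction j using Fin.lastCases <;> simp [init])

lemma w_last_eq_last (σ : SetPartition (n + 1) (K + 1))
    (h : ∀ j : Fin n, σ.w j.castSucc ≠ σ.w (Fin.last n)) : σ.w (Fin.last n) = Fin.last K := by
  by_contra hne
  obtain ⟨j, hj⟩ := σ.surj (Fin.last K)
  obtain ⟨j', hj', hw⟩ := σ.rgf j _ (hj ▸ (Fin.le_last _).lt_of_ne hne)
  obtain ⟨j', rfl⟩ := Fin.exists_castSucc_eq.2 (hj'.trans_le (Fin.le_last j)).ne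
  exact h j' hw

def initNew (σ : SetPartition (n + 1) (K + 1))
    (h : ∀ j : Fin n, σ.w j.castSucc ≠ σ.w (Fin.last n)) : SetPartition n K where
  w j := (σ.w j.castSucc).castPred (σ.w_last_eq_last h ▸ h j)
  surj c := by
    obtain ⟨j, hj⟩ := σ.surj c.castSucc
    induction j using Fin.lastCases with
    | last => exact absurd (σ.w_last_eq_last h ▸ hj) (Fin.castSucc_lt_last c).ne'
    | cast j => exact ⟨j, by simp [hj]⟩
  rgf i c hc := by
    obtain ⟨j, hj, hw⟩ := σ.rgf i.castSucc c.castSucc (by simpa [Fin.lt_castPred_iff] using hc)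
    obtain ⟨j, rfl⟩ := Fin.exists_castSucc_eq.2 (hj.trans (Fin.castSucc_lt_last i)).ne
    exact ⟨j, Fin.castSucc_lt_castSucc_iff.1 hj, by simp [hw]⟩

lemma initNew_snocNew (σ : SetPartition (n + 1) (K + 1))
    (h : ∀ j : Fin n, σ.w j.castSucc ≠ σ.w (Fin.last n)) : (σ.initNew h).snocNew = σ :=
  ext_w (funext fun j => by
    induction j using Fin.lastCases <;> simp [initNew, σ.w_last_eq_last h])

lemma sum_snoc_add_sum_snocNew {M : Type*} [AddCommMonoid M]
    (f : SetPartition (n + 1) (K + 1) → M) :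
    ∑ σ, f σ
      = ∑ d, ∑ π : SetPartition n (K + 1), f (π.snoc d) + ∑ π : SetPartition n K, f π.snocNew := by
  let e : (SetPartition n (K + 1) × Fin (K + 1)) ⊕ SetPartition n K →
      SetPartition (n + 1) (K + 1) := Sum.elim (fun p => p.1.snoc p.2) snocNew
  have he : e.Bijective := by
    refine ⟨?_, fun σ => ?_⟩
    · rintro (⟨π₁, d₁⟩ | π₁) (⟨π₂, d₂⟩ | π₂) h
      · simpa [e, snoc_inj] using h
      · exact absurd h (snoc_ne_snocNew _ _ _)
      · exact absurd h.symm (snoc_ne_snocNew _ _ _)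
      · exact congrArg Sum.inr (snocNew_injective h)
    · by_cases h : ∃ j : Fin n, σ.w j.castSucc = σ.w (Fin.last n)
      · exact ⟨.inl (σ.init h, _), σ.init_snoc h⟩
      · exact ⟨.inr (σ.initNew (not_exists.1 h)), σ.initNew_snocNew _⟩
  rw [← Fintype.sum_bijective e he (f ∘ e) f fun _ => rfl, Fintype.sum_sum_type,
    Fintype.sum_prod_type_right]
  rfl

def rightBlocks (T : Finset (Fin K)) : ℕ := ∑ c ∈ T, (K - 1 - c)

lemma rightBlocks_insert {d : Fin (K + 1)} {U : Finset (Fin (K + 1))} (hd : d ∉ U) :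
    rightBlocks (insert d U) = rightBlocks U + (K - d) := by
  rw [rightBlocks, sum_insert hd, add_comm, rightBlocks, Nat.add_sub_cancel]

lemma rightBlocks_eq_preimage_castSucc (U : Finset (Fin (K + 1))) :
    rightBlocks U = rightBlocks (U.preimage Fin.castSucc (Fin.castSucc_injective K).injOn)
      + #(U.preimage Fin.castSucc (Fin.castSucc_injective K).injOn) := by
  have last : ∀ c ∈ U, c ∉ Set.range Fin.castSucc → K + 1 - 1 - (c : ℕ) = 0 := fun c _ hc => by
    obtain rfl : c = Fin.last K := Fin.eq_last_of_not_lt (by simpa using hc)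
    simp
  rw [rightBlocks, ← sum_preimage Fin.castSucc U (Fin.castSucc_injective K).injOn _ last,
    rightBlocks, card_eq_sum_ones, ← sum_add_distrib]
  refine sum_congr rfl fun c _ => ?_
  simp only [Fin.val_castSucc]
  omega

def makSubNrinv (π : SetPartition n K) (T : Finset (Fin K)) : ℤ :=
  π.mak - ∑ c ∈ T, (π.nrinv (π.blockMax c) : ℤ)

@[simp] lemma makSubNrinv_empty (π : SetPartition n K) : π.makSubNrinv ∅ = π.mak := by
  simp [makSubNrinv]

lemma makSubNrinv_snoc (π : SetPartition n (K + 1)) (d : Fin (K + 1))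
    (U : Finset (Fin (K + 1))) :
    (π.snoc d).makSubNrinv U = π.makSubNrinv (insert d U) + (K - #{c ∈ U | c < d} : ℤ) := by
  have hmak := π.mak_snoc d
  have hsum := π.sum_nrinv_blockMax_snoc d U
  simp only [makSubNrinv, ← Nat.cast_sum]
  omega

lemma makSubNrinv_snocNew (π : SetPartition n K) (U : Finset (Fin (K + 1))) :
    π.snocNew.makSubNrinv U
      = π.makSubNrinv (U.preimage Fin.castSucc (Fin.castSucc_injective K).injOn)
        + (K - #(U.preimage Fin.castSucc (Fin.castSucc_injective K).injOn) : ℤ) := by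
  simp only [makSubNrinv, ← Nat.cast_sum, mak_snocNew, sum_nrinv_blockMax_snocNew,
    sum_add_distrib, card_eq_sum_ones]
  push_cast
  ring

lemma neg_rightBlocks_insert_add (U : Finset (Fin (K + 1))) (d : Fin (K + 1)) :
    -(rightBlocks (insert d U) : ℤ) + (K - #{c ∈ U | c < d} : ℤ)
      = -(rightBlocks U : ℤ)
        + ((if d ∈ U then K + 1 - 1 - #{c ∈ U | c < d} else #{c ∈ Uᶜ | c < d} : ℕ) : ℤ) := by
  have hd := d.is_le
  have hrank := Fin.card_filter_lt_add_card_filter_compl_lt U d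
  split_ifs with hdU
  · rw [insert_eq_of_mem hdU]
    omega
  · rw [rightBlocks_insert hdU]
    omega

variable {α : Type*} [Semifield α] {q : α}

lemma sum_zpow_makSubNrinv_succ (hq : q ≠ 0)
    (ih : ∀ K (T : Finset (Fin K)), ∑ π : SetPartition n K, q ^ π.makSubNrinv T
      = q ^ (-(rightBlocks T : ℤ)) * ∑ π : SetPartition n K, q ^ (π.mak : ℤ))
    (U : Finset (Fin (K + 1))) :
    ∑ σ : SetPartition (n + 1) (K + 1), q ^ σ.makSubNrinv U
      = q ^ (-(rightBlocks U : ℤ)) * ((∑ j ∈ range (K + 1), q ^ j) *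
          ∑ π : SetPartition n (K + 1), q ^ (π.mak : ℤ)
        + q ^ K * ∑ π : SetPartition n K, q ^ (π.mak : ℤ)) := by
  simp only [sum_snoc_add_sum_snocNew, makSubNrinv_snoc, makSubNrinv_snocNew, zpow_add₀ hq,
    ← sum_mul, ih]
  have hsnoc : ∀ d : Fin (K + 1),
      q ^ (-(rightBlocks (insert d U) : ℤ)) * q ^ (K - #{c ∈ U | c < d} : ℤ)
        = q ^ (-(rightBlocks U : ℤ)) * q ^ (if d ∈ U then K + 1 - 1 - #{c ∈ U | c < d}
            else #{c ∈ Uᶜ | c < d}) := fun d => by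
    rw [← zpow_add₀ hq, neg_rightBlocks_insert_add, zpow_add₀ hq, zpow_natCast]
  have hnew : q ^ (-(rightBlocks (U.preimage Fin.castSucc (Fin.castSucc_injective K).injOn) : ℤ))
      * q ^ (K - #(U.preimage Fin.castSucc (Fin.castSucc_injective K).injOn) : ℤ)
        = q ^ (-(rightBlocks U : ℤ)) * q ^ K := by
    rw [← zpow_add₀ hq, rightBlocks_eq_preimage_castSucc U, ← zpow_natCast, ← zpow_add₀ hq]
    push_cast
    ring_nf
  simp only [mul_right_comm _ (∑ π : SetPartition n _, _), hsnoc, hnew, ← sum_mul, ← mul_sum,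
    Fin.sum_pow_rank]
  ring

theorem sum_zpow_makSubNrinv (hq : q ≠ 0) (n K : ℕ) (T : Finset (Fin K)) :
    ∑ π : SetPartition n K, q ^ π.makSubNrinv T
      = q ^ (-(rightBlocks T : ℤ)) * ∑ π : SetPartition n K, q ^ (π.mak : ℤ) := by
  induction n generalizing K with
  | zero =>
    cases K with
    | zero => simp [T.eq_empty_of_isEmpty, rightBlocks]
    | succ K =>
      have : IsEmpty (SetPartition 0 (K + 1)) := ⟨fun π => (π.surj 0).elim fun j _ => j.elim0⟩
      simp
  | succ n ih =>
    cases K with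
    | zero =>
      have : IsEmpty (SetPartition (n + 1) 0) := ⟨fun π => (π.w 0).elim0⟩
      simp
    | succ K =>
      have h := sum_zpow_makSubNrinv_succ hq ih (∅ : Finset (Fin (K + 1)))
      simp only [makSubNrinv_empty, rightBlocks, sum_empty, Nat.cast_zero, neg_zero, zpow_zero,
        one_mul] at h
      rw [sum_zpow_makSubNrinv_succ hq ih, h]

end SetPartition

/-- Let `m ≥ 1` and `k ≥ 0` with `k+1 ≤ m`, and let `i ∈ [k]`. Then for
every real `q > 0`:
`Σ_{π ∈ P(m,k+1)} q^{mak(π) + k - nrinv(g(B_{i+1}),π)} = q^i · Σ_{π ∈ P(m,k+1)} q^{mak(π)}`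
(the block `B_{i+1}` having Fin-index `i`). -/
theorem sum_q_mak_nrinv_eq (m k : ℕ) (i : ℕ) (hik : i ≤ k) (q : ℝ) (hq : 0 < q) :
    ∑ π : SetPartition m (k + 1),
        q ^ ((π.mak : ℤ) + (k : ℤ) - (π.nrinv (π.blockMax ⟨i, by omega⟩) : ℤ)) =
      q ^ (i : ℤ) * ∑ π : SetPartition m (k + 1), q ^ (π.mak : ℤ) := by
  have h := SetPartition.sum_zpow_makSubNrinv hq.ne' m (k + 1) {⟨i, by omega⟩}
  simp only [SetPartition.makSubNrinv, SetPartition.rightBlocks, sum_singleton] at h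
  have hexp : ∀ π : SetPartition m (k + 1),
      (π.mak : ℤ) + k - π.nrinv (π.blockMax ⟨i, by omega⟩)
        = k + ((π.mak : ℤ) - π.nrinv (π.blockMax ⟨i, by omega⟩)) := fun π => by ring
  rw [sum_congr rfl fun π _ => by rw [hexp, zpow_add₀ hq.ne'], ← mul_sum, h, ← mul_assoc,
    ← zpow_add₀ hq.ne']
  congr 2
  push_cast
  omega
end
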